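/- arXiv:2107.12454 — 7 statements merged into one kernel-verified Lean document; each statement's English description precedes it below -/
import Mathlib

section
/- If ε is a perfect congruence on a semigroup S, then δ_r ∘ ε = ε ∘ δ_r, where δ_r is the right divisibility relation on S. -/
theorem perfect_implies_divr_comm {S : Type*} [Semigroup S] (ε : Con S)
    (hperf : ∀ x y : S, Set.image2 (· * ·) {a | ε x a} {b | ε y b} = {c | ε (x * y) c}) :
    Relation.Comp (fun a b => ∃ s, b = a * s) (fun a b => ε a b)
      = Relation.Comp (fun a b => ε a b) (fun a b => ∃ s, b = a * s) := by
  funext a c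
  apply propext
  constructor
  · rintro ⟨b, ⟨s, rfl⟩, hbc⟩
    have : c ∈ ({c | ε (a * s) c} : Set S) := hbc
    rw [← hperf a s] at this
    obtain ⟨a', ha', s', hs', rfl⟩ := this
    exact ⟨a', ha', s', rfl⟩
  · rintro ⟨b, hab, s, rfl⟩
    exact ⟨a * s, ⟨s, rfl⟩, ε.mul hab (ε.refl s)⟩
end

section
/- A left cancellative congruence ε on a semigroup S is perfect if and only if δ_r ∘ ε = ε ∘ δ_r. -/
theorem left_cancellative_perfect_iff {S : Type*} [Semigroup S] (ε : Con S)
    (hlc : ∀ a b c : S, ε (a * b) (a * c) → ε b c) :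
    (∀ x y : S, Set.image2 (· * ·) {a | ε x a} {b | ε y b} = {c | ε (x * y) c}) ↔
      Relation.Comp (fun a b => ∃ s, b = a * s) (fun a b => ε a b)
        = Relation.Comp (fun a b => ε a b) (fun a b => ∃ s, b = a * s) := by
  constructor
  · intro hp
    funext a c
    apply propext
    constructor
    · rintro ⟨b, ⟨s, rfl⟩, hbc⟩
      -- ε (a*s) c, so c ∈ class of a*s = image2 of classes
      have := hp a s
      have hc : c ∈ {c | ε (a * s) c} := hbc
      rw [← this] at hc
      obtain ⟨a', ha', s', hs', rfl⟩ := hc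
      exact ⟨a', ha', s', rfl⟩
    · rintro ⟨b, hab, t, rfl⟩
      exact ⟨a * t, ⟨t, rfl⟩, ε.mul hab (ε.refl t)⟩
  · intro h x y
    ext c
    constructor
    · rintro ⟨a, ha, b, hb, rfl⟩
      exact ε.mul ha hb
    · intro hc
      have h1 : Relation.Comp (fun a b => ∃ s, b = a * s) (fun a b => ε a b) x c :=
        ⟨x * y, ⟨y, rfl⟩, hc⟩
      rw [h] at h1
      obtain ⟨b, hxb, t, rfl⟩ := h1
      refine ⟨b, hxb, t, ?_, rfl⟩
      exact hlc x y t (ε.trans hc (ε.mul (ε.symm hxb) (ε.refl t)))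
end

section
/- A group congruence ε on a semigroup S is perfect if and only if ε ∘ δ_r = S × S. -/
theorem group_congruence_perfect_iff {S : Type*} [Semigroup S] (ε : Con S)
    (hgrp : ∃ u : S, (∀ x : S, ε (u * x) x ∧ ε (x * u) x) ∧
      ∀ x : S, ∃ y : S, ε (x * y) u ∧ ε (y * x) u) :
    (∀ x y : S, Set.image2 (· * ·) {a | ε x a} {b | ε y b} = {c | ε (x * y) c}) ↔
      (∀ a c : S, ∃ b : S, ε a b ∧ ∃ s, c = b * s) := by
  obtain ⟨u, hu, hinv⟩ := hgrp
  constructor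
  · intro hperf a c
    obtain ⟨y, hy1, hy2⟩ := hinv a
    have hc : ε (a * (y * c)) c := by
      have h1 : ε (a * (y * c)) (u * c) := by
        rw [← mul_assoc]
        exact ε.mul hy1 (ε.refl c)
      exact ε.trans h1 (hu c).1
    have := hperf a (y * c)
    have hmem : c ∈ Set.image2 (· * ·) {a' | ε a a'} {b | ε (y * c) b} := by
      rw [this]; exact hc
    obtain ⟨b, hb, s, hs, hbs⟩ := hmem
    exact ⟨b, hb, s, hbs.symm⟩
  · intro h x y
    ext c
    constructor
    · rintro ⟨a, ha, b, hb, rfl⟩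
      exact ε.mul ha hb
    · intro hc
      obtain ⟨b, hb, s, rfl⟩ := h x c
      -- ε (x*y) (b*s), ε x b ⇒ ε (x*y) (x*s) ⇒ ε y s by left cancel
      have h1 : ε (x * y) (x * s) :=
        ε.trans hc (ε.mul (ε.symm hb) (ε.refl s))
      obtain ⟨z, hz1, hz2⟩ := hinv x
      have h2 : ε (z * (x * y)) (z * (x * s)) := ε.mul (ε.refl z) h1
      have h3 : ∀ w : S, ε (z * (x * w)) w := by
        intro w
        have : ε (z * (x * w)) (u * w) := by
          rw [← mul_assoc]; exact ε.mul hz2 (ε.refl w)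
        exact ε.trans this (hu w).1
      have hys : ε y s := ε.trans (ε.symm (h3 y)) (ε.trans h2 (h3 s))
      exact ⟨b, hb, s, hys, rfl⟩
end

section
/- If ε is any congruence on BR(G,α), then N_ε = {a ∈ G : ((0,a,0),(0,e,0)) ∈ ε} is an α-admissible normal subgroup of G, i.e., N_ε is normal in G and N_ε α ⊆ N_ε. -/
def brmul {G : Type*} [Group G] (α : G →* G) (x y : ℕ × G × ℕ) : ℕ × G × ℕ :=
  (x.1 + y.1 - min x.2.2 y.1,
    (⇑α)^[y.1 - min x.2.2 y.1] x.2.1 * (⇑α)^[x.2.2 - min x.2.2 y.1] y.2.1,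
    x.2.2 + y.2.2 - min x.2.2 y.1)

theorem Neps_normal_admissible {G : Type*} [Group G] (α : G →* G)
    (ε : (ℕ × G × ℕ) → (ℕ × G × ℕ) → Prop) (heq : Equivalence ε)
    (hcompat : ∀ a b c d : ℕ × G × ℕ, ε a b → ε c d → ε (brmul α a c) (brmul α b d)) :
    ∃ N : Subgroup G, N.Normal ∧ (↑N = {a : G | ε (0, a, 0) (0, (1 : G), 0)}) ∧
      ∀ a ∈ N, α a ∈ N := by
  have key : ∀ a b : G, brmul α (0, a, 0) (0, b, 0) = (0, a * b, 0) := by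
    intro a b; simp [brmul]
  have keyα : ∀ a : G,
      brmul α (brmul α (0, (1 : G), 1) (0, a, 0)) (1, (1 : G), 0) = (0, α a, 0) := by
    intro a; simp [brmul]
  refine ⟨{ carrier := {a : G | ε (0, a, 0) (0, (1 : G), 0)}
            one_mem' := heq.refl _
            mul_mem' := ?_
            inv_mem' := ?_ }, ⟨?_⟩, rfl, ?_⟩
  · intro a b ha hb
    have := hcompat _ _ _ _ ha hb
    rw [key, key, mul_one] at this
    exact this
  · intro a ha
    have := hcompat _ _ _ _ ha (heq.refl (0, a⁻¹, 0))
    rw [key, key, mul_inv_cancel, one_mul] at this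
    exact heq.symm this
  · intro n hn g
    have := hcompat _ _ _ _ (hcompat _ _ _ _ (heq.refl (0, g, 0)) hn)
      (heq.refl (0, g⁻¹, 0))
    rw [key, key, key, key, mul_one, mul_inv_cancel] at this
    exact this
  · intro a ha
    have := hcompat _ _ _ _ (hcompat _ _ _ _ (heq.refl (0, (1 : G), 1)) ha)
      (heq.refl (1, (1 : G), 0))
    rw [keyα, keyα, map_one] at this
    exact this
end

section
/- Every idempotent-separating congruence on the Bruck–Reilly extension BR(G,α) is perfect: if ε is a congruence such that ((m,g,n),(p,h,q)) ∈ ε iff m = p, n = q and gh^{-1} ∈ N for some α-admissible normal subgroup N of G, then for all x, y ∈ BR(G,α), the set product (xε)(yε) equals (xy)ε. -/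
theorem idempotent_separating_perfect {G : Type*} [Group G] (α : G →* G)
    (N : Subgroup G) (hN : N.Normal) (hadm : ∀ a ∈ N, α a ∈ N)
    (ε : (ℕ × G × ℕ) → (ℕ × G × ℕ) → Prop)
    (hε : ∀ m p n q : ℕ, ∀ g h : G,
      ε (m, g, n) (p, h, q) ↔ m = p ∧ n = q ∧ g * h⁻¹ ∈ N) :
    ∀ x y : ℕ × G × ℕ,
      Set.image2 (brmul α) {a | ε x a} {b | ε y b} = {c | ε (brmul α x y) c} := by
  have hiter : ∀ k : ℕ, ∀ a ∈ N, (⇑α)^[k] a ∈ N := by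
    intro k
    induction k with
    | zero => intro a ha; simpa using ha
    | succ k ih =>
        intro a ha
        rw [Function.iterate_succ_apply]
        exact ih _ (hadm a ha)
  rintro ⟨m, g, n⟩ ⟨p, h, q⟩
  ext ⟨c1, w, c3⟩
  simp only [Set.mem_image2, Set.mem_setOf_eq]
  constructor
  · rintro ⟨⟨a1, g', a3⟩, ha, ⟨b1, h', b3⟩, hb, hab⟩
    rw [hε] at ha hb
    obtain ⟨rfl, rfl, hg⟩ := ha
    obtain ⟨rfl, rfl, hh⟩ := hb
    rw [← hab]
    simp only [brmul]
    rw [hε]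
    refine ⟨rfl, rfl, ?_⟩
    set r := n ⊓ p with hr
    have h1 : (⇑α)^[p - r] g * ((⇑α)^[p - r] g')⁻¹ ∈ N := by
      rw [← iterate_map_inv, ← iterate_map_mul]
      exact hiter _ _ hg
    have h2 : (⇑α)^[n - r] h * ((⇑α)^[n - r] h')⁻¹ ∈ N := by
      rw [← iterate_map_inv, ← iterate_map_mul]
      exact hiter _ _ hh
    set u := (⇑α)^[p - r] g
    set u' := (⇑α)^[p - r] g'
    set v := (⇑α)^[n - r] h
    set v' := (⇑α)^[n - r] h'
    have key : u * v * (u' * v')⁻¹ = (u * (v * v'⁻¹) * u⁻¹) * (u * u'⁻¹) := by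
      group
    rw [key]
    exact mul_mem (hN.conj_mem _ h2 u) h1
  · intro hc
    rw [hε] at hc
    obtain ⟨h1, h3, hw⟩ := hc
    rcases le_total p n with hpn | hnp
    · refine ⟨(m, w * ((⇑α)^[n - p] h)⁻¹, n), ?_, (p, h, q), ?_, ?_⟩
      · rw [hε]
        refine ⟨rfl, rfl, ?_⟩
        simp only [brmul, min_eq_right hpn, Nat.sub_self, Function.iterate_zero, id_eq] at hw
        have : g * (w * ((⇑α)^[n - p] h)⁻¹)⁻¹ = g * (⇑α)^[n - p] h * w⁻¹ := by group
        rw [this]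
        exact hw
      · rw [hε]
        exact ⟨rfl, rfl, by simpa using one_mem N⟩
      · simp only [brmul, min_eq_right hpn, Nat.sub_self, Function.iterate_zero, id_eq] at h1 h3 ⊢
        subst h1 h3
        simp only [Prod.mk.injEq]
        exact ⟨trivial, by group, trivial⟩
    · refine ⟨(m, g, n), ?_, (p, ((⇑α)^[p - n] g)⁻¹ * w, q), ?_, ?_⟩
      · rw [hε]
        exact ⟨rfl, rfl, by simpa using one_mem N⟩
      · rw [hε]
        refine ⟨rfl, rfl, ?_⟩
        simp only [brmul, min_eq_left hnp, Nat.sub_self, Function.iterate_zero, id_eq] at hw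
        set u := (⇑α)^[p - n] g
        have : h * (u⁻¹ * w)⁻¹ = u⁻¹ * (u * h * w⁻¹) * u⁻¹⁻¹ := by group
        rw [this]
        exact hN.conj_mem _ hw u⁻¹
      · simp only [brmul, min_eq_left hnp, Nat.sub_self, Function.iterate_zero, id_eq] at h1 h3 ⊢
        subst h1 h3
        simp only [Prod.mk.injEq]
        exact ⟨trivial, by group, trivial⟩
end

section
/- Given an idempotent-separating congruence ε on BR(G,α) corresponding to an α-admissible normal subgroup N, and elements x = (m,g,n), y = (p,h,q) with r = min(n,p): for every c ∈ N there exist a, b ∈ N such that c·(g α^{p-r}) = (a α^{p-r})·(g α^{p-r})·(b α^{n-r}). -/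
theorem key_identity {G : Type*} [Group G] (α : G →* G)
    (N : Subgroup G) (hN : N.Normal) (hadm : ∀ a ∈ N, α a ∈ N)
    (n p r : ℕ) (hr : r = min n p) (g : G) :
    ∀ c ∈ N, ∃ a ∈ N, ∃ b ∈ N,
      c * (⇑α)^[p - r] g = (⇑α)^[p - r] a * (⇑α)^[p - r] g * (⇑α)^[n - r] b := by
  intro c hc
  rcases le_total p n with h | h
  · -- r = p, so p - r = 0
    have hrp : r = p := by omega
    refine ⟨c, hc, 1, N.one_mem, ?_⟩
    simp [hrp]
  · -- r = n, so n - r = 0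
    have hrn : r = n := by omega
    set x := (⇑α)^[p - r] g with hx
    refine ⟨1, N.one_mem, x⁻¹ * c * x, ?_, ?_⟩
    · exact (hN.conj_mem' c hc x)
    · simp [hrn]
      group
end

section
/- Let S = BR(G,α), N an α-invariant normal subgroup of G, z ∈ G, and k ∈ ℕ such that N(zα) = Nz and g^{-1}(Nz)(g α^k) = Nz for all g ∈ G. Then N z^l α^n = N z^l for all l ≥ 1 and n ≥ 0 (where cosets are taken elementwise, α acting elementwise). -/
open Pointwise

lemma coset_eq_iff' {G : Type*} [Group G] (N : Subgroup G) (a b : G) :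
    (N : Set G) * {a} = (N : Set G) * {b} ↔ a * b⁻¹ ∈ N := by
  rw [Set.mul_singleton, Set.mul_singleton]
  constructor
  · intro h
    have ha : a ∈ (fun x => x * a) '' (N : Set G) := ⟨1, N.one_mem, one_mul a⟩
    rw [h] at ha
    obtain ⟨n, hn, hnb⟩ := ha
    have : a * b⁻¹ = n := by simp only at hnb; rw [← hnb]; group
    rw [this]; exact hn
  · intro h
    ext x
    simp only [Set.mem_image]
    constructor
    · rintro ⟨n, hn, rfl⟩
      exact ⟨n * (a * b⁻¹), N.mul_mem hn h, by group⟩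
    · rintro ⟨n, hn, rfl⟩
      exact ⟨n * (a * b⁻¹)⁻¹, N.mul_mem hn (N.inv_mem h), by group⟩

theorem coset_fixed_under_alpha {G : Type*} [Group G] (α : G →* G)
    (N : Subgroup G) (hN : N.Normal) (hinvariant : (⇑α) ⁻¹' ↑N = ↑N)
    (z : G) (k : ℕ)
    (h1 : (N : Set G) * {α z} = (N : Set G) * {z})
    (h2 : ∀ g : G, {g⁻¹} * ((N : Set G) * {z}) * {(⇑α)^[k] g} = (N : Set G) * {z}) :
    ∀ l : ℕ, 1 ≤ l → ∀ n : ℕ,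
      (N : Set G) * {(⇑α)^[n] (z ^ l)} = (N : Set G) * {z ^ l} := by
  have hαN : ∀ x, x ∈ N → α x ∈ N := by
    intro x hx
    have : x ∈ (⇑α) ⁻¹' ↑N := by rw [hinvariant]; exact hx
    exact this
  have h1' : α z * z⁻¹ ∈ N := (coset_eq_iff' N _ _).mp h1
  have step1 : ∀ l : ℕ, α (z ^ l) * (z ^ l)⁻¹ ∈ N := by
    intro l
    induction l with
    | zero => simpa using N.one_mem
    | succ l ih =>
      have hc : z ^ l * (α z * z⁻¹) * (z ^ l)⁻¹ ∈ N := hN.conj_mem _ h1' _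
      have := N.mul_mem ih hc
      have heq : α (z ^ l) * (z ^ l)⁻¹ * (z ^ l * (α z * z⁻¹) * (z ^ l)⁻¹)
          = α (z ^ (l + 1)) * (z ^ (l + 1))⁻¹ := by
        rw [map_pow, map_pow, pow_succ]
        group
      rwa [heq] at this
  intro l _ n
  apply (coset_eq_iff' N _ _).mpr
  induction n with
  | zero => simpa using N.one_mem
  | succ n ih =>
    rw [Function.iterate_succ_apply']
    have h3 : α ((⇑α)^[n] (z ^ l)) * (α (z ^ l))⁻¹ ∈ N := by
      have := hαN _ ih
      rwa [map_mul, map_inv] at this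
    have := N.mul_mem h3 (step1 l)
    have heq : α ((⇑α)^[n] (z ^ l)) * (α (z ^ l))⁻¹ * (α (z ^ l) * (z ^ l)⁻¹)
        = α ((⇑α)^[n] (z ^ l)) * (z ^ l)⁻¹ := by group
    rwa [heq] at this
end
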